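/- The covariance function of fractional Brownian motion, γ_H(s,t) = ½(s^{2H} + t^{2H} − |t−s|^{2H}) for s,t ≥ 0 and H ∈ (0,1), is positive semidefinite: for any n, points t₁,…,tₙ ≥ 0 and reals c₁,…,cₙ, one has Σ_{i,j} c_i c_j γ_H(t_i, t_j) ≥ 0. -/

import Mathlib

/-!
For `0 < α < 2` the substitution `y = |u| x` gives
`∫₀^∞ (1 - cos (u x)) x^(-1-α) dx = |u|^α · C_α` with `0 < C_α < ∞`, so with `α = 2H` the
covariance `γ_H(s,t)` is a positive multiple of the integral over `x > 0`, against `x^(-1-2H)`, of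
`(1 - cos (s x)) + (1 - cos (t x)) - (1 - cos ((t - s) x))`. For fixed `x` this kernel equals
`Re ((1 - e^{isx}) (1 - e^{-itx}))`, whose quadratic form is `|∑ c_i (1 - e^{i t_i x})|² ≥ 0`.
-/

/-- The fBm covariance function. -/
noncomputable def fbmCov (H : ℝ) (s t : ℝ) : ℝ :=
  (1 / 2) * (|s| ^ (2 * H) + |t| ^ (2 * H) - |t - s| ^ (2 * H))

open MeasureTheory Set Real

noncomputable def oneSubCosIntegral (p u : ℝ) : ℝ :=
  ∫ x in Ioi 0, (1 - cos (u * x)) * x ^ p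

lemma integrableOn_one_sub_cos_mul_rpow {p : ℝ} (hp₁ : -3 < p) (hp₂ : p < -1) (u : ℝ) :
    IntegrableOn (fun x => (1 - cos (u * x)) * x ^ p) (Ioi 0) := by
  have hmeas : AEStronglyMeasurable (fun x : ℝ => (1 - cos (u * x)) * x ^ p) := by fun_prop
  rw [← Ioc_union_Ioi_eq_Ioi zero_le_one]
  refine IntegrableOn.union ?_ ?_
  · have hdom : IntegrableOn (fun x : ℝ => u ^ 2 / 2 * x ^ (p + 2)) (Ioc 0 1) :=
      ((intervalIntegrable_iff_integrableOn_Ioc_of_le zero_le_one).1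
        (intervalIntegral.intervalIntegrable_rpow' (by linarith))).const_mul _
    refine hdom.mono' hmeas.restrict ((ae_restrict_iff' measurableSet_Ioc).2 ?_)
    refine .of_forall fun x hx => ?_
    have hxp : 0 < x ^ p := rpow_pos_of_pos hx.1 p
    rw [norm_mul, Real.norm_of_nonneg (by linarith [cos_le_one (u * x)]),
      Real.norm_of_nonneg hxp.le, rpow_add hx.1, rpow_two]
    nlinarith [one_sub_sq_div_two_le_cos (x := u * x)]
  · have hdom : IntegrableOn (fun x : ℝ => 2 * x ^ p) (Ioi 1) :=
      (integrableOn_Ioi_rpow_of_lt hp₂ zero_lt_one).const_mul 2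
    refine hdom.mono' hmeas.restrict ((ae_restrict_iff' measurableSet_Ioi).2 ?_)
    refine .of_forall fun x (hx : 1 < x) => ?_
    have hxp : 0 < x ^ p := rpow_pos_of_pos (by linarith) p
    rw [norm_mul, Real.norm_of_nonneg (by linarith [cos_le_one (u * x)]),
      Real.norm_of_nonneg hxp.le]
    nlinarith [neg_one_le_cos (u * x)]

lemma oneSubCosIntegral_abs (p u : ℝ) : oneSubCosIntegral p |u| = oneSubCosIntegral p u := by
  rcases abs_choice u with h | h <;> simp [oneSubCosIntegral, h]

lemma oneSubCosIntegral_eq_abs_rpow_mul {p : ℝ} (hp : p < -1) (u : ℝ) :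
    oneSubCosIntegral p u = |u| ^ (-1 - p) * oneSubCosIntegral p 1 := by
  rcases eq_or_ne u 0 with rfl | hu
  · simp [oneSubCosIntegral, zero_rpow (by linarith : -1 - p ≠ 0)]
  have ha : 0 < |u| := abs_pos.2 hu
  have hscale : ∀ x ∈ Ioi (0 : ℝ), (1 - cos (|u| * x)) * x ^ p
      = |u| ^ (-p) * ((1 - cos (|u| * x)) * (|u| * x) ^ p) := fun x hx => by
    rw [mul_rpow ha.le (le_of_lt hx), rpow_neg ha.le]
    field_simp
  rw [← oneSubCosIntegral_abs, oneSubCosIntegral, setIntegral_congr_fun measurableSet_Ioi hscale,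
    integral_const_mul, integral_comp_mul_left_Ioi (fun y => (1 - cos y) * y ^ p) 0 ha,
    mul_zero, smul_eq_mul, ← mul_assoc, ← rpow_neg_one, ← rpow_add ha, neg_add_eq_sub]
  simp [oneSubCosIntegral]

lemma oneSubCosIntegral_one_pos {p : ℝ} (hp₁ : -3 < p) (hp₂ : p < -1) :
    0 < oneSubCosIntegral p 1 := by
  have hint := integrableOn_one_sub_cos_mul_rpow hp₁ hp₂ 1
  have hnonneg : ∀ x ∈ Ioi (0 : ℝ), 0 ≤ (1 - cos (1 * x)) * x ^ p := fun x hx =>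
    mul_nonneg (by linarith [cos_le_one (1 * x)]) (rpow_nonneg (le_of_lt hx) p)
  rw [oneSubCosIntegral, setIntegral_pos_iff_support_of_nonneg_ae
    ((ae_restrict_iff' measurableSet_Ioi).2 (.of_forall hnonneg)) hint]
  have hsupp : Ioo 0 (2 * π) ⊆ Function.support (fun x => (1 - cos (1 * x)) * x ^ p) ∩ Ioi 0 :=
    fun x hx => by
      refine ⟨mul_ne_zero ?_ (rpow_pos_of_pos hx.1 p).ne', hx.1⟩
      rw [one_mul, sub_ne_zero, ne_comm, Ne,
        cos_eq_one_iff_of_lt_of_lt (by linarith [hx.1, pi_pos]) hx.2]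
      exact hx.1.ne'
  exact (Real.volume_Ioo ▸ ENNReal.ofReal_pos.2 (by linarith [pi_pos])).trans_le
    (measure_mono hsupp)

lemma sum_sum_mul_one_sub_cos_eq {ι : Type*} [Fintype ι] (c θ : ι → ℝ) :
    ∑ i, ∑ j, c i * c j * ((1 - cos (θ i)) + (1 - cos (θ j)) - (1 - cos (θ j - θ i)))
      = (∑ i, c i * (1 - cos (θ i))) ^ 2 + (∑ i, c i * sin (θ i)) ^ 2 := by
  simp only [sq, Finset.sum_mul_sum, ← Finset.sum_add_distrib, cos_sub]
  refine Finset.sum_congr rfl fun i _ => Finset.sum_congr rfl fun j _ => ?_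
  ring

lemma sum_sum_mul_oneSubCosIntegral_nonneg {ι : Type*} [Fintype ι] {p : ℝ} (hp₁ : -3 < p)
    (hp₂ : p < -1) (t c : ι → ℝ) :
    0 ≤ ∑ i, ∑ j, c i * c j *
      (oneSubCosIntegral p (t i) + oneSubCosIntegral p (t j) - oneSubCosIntegral p (t j - t i)) := by
  set g : ℝ → ℝ → ℝ := fun u x => (1 - cos (u * x)) * x ^ p
  have hg : ∀ u, IntegrableOn (g u) (Ioi 0) := integrableOn_one_sub_cos_mul_rpow hp₁ hp₂
  have hterm : ∀ i j, IntegrableOn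
      (fun x => c i * c j * (g (t i) x + g (t j) x - g (t j - t i) x)) (Ioi 0) :=
    fun i j => (((hg (t i)).add (hg (t j))).sub (hg (t j - t i))).const_mul _
  have hpointwise : ∀ x ∈ Ioi (0 : ℝ),
      0 ≤ ∑ i, ∑ j, c i * c j * (g (t i) x + g (t j) x - g (t j - t i) x) := fun x hx => by
    have h := sum_sum_mul_one_sub_cos_eq c (fun i => t i * x)
    calc 0 ≤ ((∑ i, c i * (1 - cos (t i * x))) ^ 2 + (∑ i, c i * sin (t i * x)) ^ 2) * x ^ p :=
          mul_nonneg (by positivity) (rpow_nonneg (le_of_lt hx) p)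
      _ = _ := by
          simp only [← h, Finset.sum_mul, g, sub_mul]
          refine Finset.sum_congr rfl fun i _ => Finset.sum_congr rfl fun j _ => ?_
          ring
  calc 0 ≤ ∫ x in Ioi 0, ∑ i, ∑ j, c i * c j * (g (t i) x + g (t j) x - g (t j - t i) x) :=
        setIntegral_nonneg measurableSet_Ioi hpointwise
    _ = _ := by
        rw [integral_finsetSum _ fun i _ => integrable_finsetSum _ fun j _ => hterm i j]
        refine Finset.sum_congr rfl fun i _ => ?_
        rw [integral_finsetSum _ fun j _ => hterm i j]
        refine Finset.sum_congr rfl fun j _ => ?_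
        have hadd : IntegrableOn (fun x => g (t i) x + g (t j) x) (Ioi 0) := (hg _).add (hg _)
        rw [integral_const_mul, integral_sub hadd (hg _), integral_add (hg _) (hg _)]
        rfl

lemma fbmCov_eq_oneSubCosIntegral {H : ℝ} (hH0 : 0 < H) (hH1 : H < 1) (s t : ℝ) :
    fbmCov H s t = (oneSubCosIntegral (-1 - 2 * H) s + oneSubCosIntegral (-1 - 2 * H) t
      - oneSubCosIntegral (-1 - 2 * H) (t - s)) / (2 * oneSubCosIntegral (-1 - 2 * H) 1) := by
  have hp : -1 - 2 * H < -1 := by linarith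
  have hK := (oneSubCosIntegral_one_pos (by linarith) hp).ne'
  rw [oneSubCosIntegral_eq_abs_rpow_mul hp s, oneSubCosIntegral_eq_abs_rpow_mul hp t,
    oneSubCosIntegral_eq_abs_rpow_mul hp (t - s), sub_sub_cancel, fbmCov]
  field_simp

theorem fbmCov_posSemidef_general (H : ℝ) (hH0 : 0 < H) (hH1 : H < 1)
    (n : ℕ) (t : Fin n → ℝ) (c : Fin n → ℝ) :
    0 ≤ ∑ i, ∑ j, c i * c j * fbmCov H (t i) (t j) := by
  have hp₁ : -3 < -1 - 2 * H := by linarith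
  have hp₂ : -1 - 2 * H < -1 := by linarith
  simp_rw [fbmCov_eq_oneSubCosIntegral hH0 hH1, ← mul_div_assoc, ← Finset.sum_div]
  exact div_nonneg (sum_sum_mul_oneSubCosIntegral_nonneg hp₁ hp₂ t c)
    (mul_nonneg zero_le_two (oneSubCosIntegral_one_pos hp₁ hp₂).le)

/-- The covariance of fractional Brownian motion is positive semidefinite. -/
theorem fbmCov_posSemidef (H : ℝ) (hH0 : 0 < H) (hH1 : H < 1)
    (n : ℕ) (t : Fin n → ℝ) (ht : ∀ i, 0 ≤ t i) (c : Fin n → ℝ) :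
    0 ≤ ∑ i, ∑ j, c i * c j * fbmCov H (t i) (t j) :=
  fbmCov_posSemidef_general H hH0 hH1 n t c
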